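/- arXiv:1202.1520 — 5 statements merged into one kernel-verified Lean document; each statement's English description precedes it below -/
import Mathlib

section
/- For every integer n ≥ 2 and all integers p, m, k, the number of (n−1)×(n−1) alternating sign matrices A with ν(A) = p, μ(A) = m and ρ₁(A) = k equals the number of n×n alternating sign matrices A with ν(A) = p, μ(A) = m, ρ₁(A) = k and ρ₂(A) = 0. Consequently Z^ASM_n(x,y,z,0) = Z^ASM_{n−1}(x,y,z,1). -/
/-!
In an alternating sign matrix every entry of the last row is the last entry of its column, whose
partial sums are `0` or `1`; hence the last row has entries in `{0, 1}`. If moreover `ρ₂(A) = 0`,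
its `1` sits in the corner, and the same argument on the last column shows that `A` is the block
matrix `A' ⊕ (1)`. Deleting the corner is then a bijection onto the ASMs of size `n - 1`, and it
preserves `ν`, `μ` and `ρ₁`: the corner `1` pairs only with zeros in the sum defining `ν`.
-/

namespace ASMDPP

/-- `A` is an alternating sign matrix: entries in `{-1,0,1}`, all partial row and
column sums in `{0,1}`, and all full row and column sums equal to `1` (this is
equivalent to the nonzero entries of each row and column alternating in sign and
summing to `1`). -/
def IsASM {n : ℕ} (A : Matrix (Fin n) (Fin n) ℤ) : Prop :=
  (∀ i j, A i j = -1 ∨ A i j = 0 ∨ A i j = 1) ∧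
  (∀ i j : Fin n, (∑ j' ∈ Finset.Iic j, A i j') = 0 ∨ (∑ j' ∈ Finset.Iic j, A i j') = 1) ∧
  (∀ i j : Fin n, (∑ i' ∈ Finset.Iic i, A i' j) = 0 ∨ (∑ i' ∈ Finset.Iic i, A i' j) = 1) ∧
  (∀ i, (∑ j, A i j) = 1) ∧
  (∀ j, (∑ i, A i j) = 1)

/-- The set of `n × n` alternating sign matrices. -/
def ASMs (n : ℕ) : Set (Matrix (Fin n) (Fin n) ℤ) := {A | IsASM A}

/-- `ν(A) = ∑_{i < i', j' ≤ j} A i j * A i' j'`, the number of generalized inversions. -/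
def nuA {n : ℕ} (A : Matrix (Fin n) (Fin n) ℤ) : ℤ :=
  ∑ p ∈ (Finset.univ : Finset ((Fin n × Fin n) × Fin n × Fin n)).filter
      (fun p => p.1.1 < p.2.1 ∧ p.2.2 ≤ p.1.2),
    A p.1.1 p.1.2 * A p.2.1 p.2.2

/-- `μ(A)`: the number of entries of `A` equal to `-1`. -/
def muA {n : ℕ} (A : Matrix (Fin n) (Fin n) ℤ) : ℕ :=
  ((Finset.univ : Finset (Fin n × Fin n)).filter (fun p => A p.1 p.2 = -1)).card

/-- `ρ₁(A)`: the number of `0`'s to the left of the `1` in the first row of `A`. -/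
def rho1A {n : ℕ} (A : Matrix (Fin n) (Fin n) ℤ) : ℕ :=
  ((Finset.univ : Finset (Fin n × Fin n)).filter
    (fun p => (p.1 : ℕ) = 0 ∧ A p.1 p.2 = 0 ∧ ∃ j', p.2 < j' ∧ A p.1 j' = 1)).card

/-- `ρ₂(A)`: the number of `0`'s to the right of the `1` in the last row of `A`. -/
def rho2A {n : ℕ} (A : Matrix (Fin n) (Fin n) ℤ) : ℕ :=
  ((Finset.univ : Finset (Fin n × Fin n)).filter
    (fun p => (p.1 : ℕ) = n - 1 ∧ A p.1 p.2 = 0 ∧ ∃ j', j' < p.2 ∧ A p.1 j' = 1)).card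

/-- The doubly-refined ASM generating function `Z^ASM_n(x,y,z₁,z₂)`. -/
noncomputable def ZASM2 {R : Type*} [CommRing R] (n : ℕ) (x y z₁ z₂ : R) : R :=
  ∑ᶠ A ∈ ASMs n, x ^ (nuA A).toNat * y ^ muA A * z₁ ^ rho1A A * z₂ ^ rho2A A

/-- The singly-refined ASM generating function `Z^ASM_n(x,y,z) = Z^ASM_n(x,y,z,1)`. -/
noncomputable def ZASM1 {R : Type*} [CommRing R] (n : ℕ) (x y z : R) : R :=
  ZASM2 n x y z 1

end ASMDPP

open Finset Matrix

lemma Fin.Iic_last (n : ℕ) : Iic (Fin.last n) = univ := Iic_top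

lemma Fin.apply_castSucc_eq_zero_of_sum_eq_last {m : ℕ} {v : Fin (m + 1) → ℤ}
    (hv : ∀ j, 0 ≤ v j) (hsum : ∑ j, v j = v (Fin.last m)) (j : Fin m) : v j.castSucc = 0 := by
  rw [Fin.sum_univ_castSucc, add_eq_right] at hsum
  exact (sum_eq_zero_iff_of_nonneg fun j _ => hv _).1 hsum j (mem_univ j)

lemma finsum_mem_mul_zero_pow {α R : Type*} [Semiring R] (s : Set α) (f : α → R) (g : α → ℕ) :
    ∑ᶠ a ∈ s, f a * 0 ^ g a = ∑ᶠ a ∈ {a ∈ s | g a = 0}, f a := calc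
  _ = ∑ᶠ a ∈ {a ∈ s | g a = 0}, f a * 0 ^ g a :=
    finsum_mem_inter_support_eq' _ _ _ fun a ha =>
      ⟨fun has => ⟨has, by_contra fun hg => ha (by simp [zero_pow hg])⟩, And.left⟩
  _ = _ := finsum_mem_congr rfl fun a ha => by simp [ha.2]

namespace ASMDPP

def IsASMLine {n : ℕ} (v : Fin n → ℤ) : Prop :=
  (∀ j, ∑ j' ∈ Iic j, v j' = 0 ∨ ∑ j' ∈ Iic j, v j' = 1) ∧ ∑ j, v j = 1

lemma isASM_iff {n : ℕ} {A : Matrix (Fin n) (Fin n) ℤ} :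
    IsASM A ↔ (∀ i j, A i j = -1 ∨ A i j = 0 ∨ A i j = 1) ∧
      (∀ i, IsASMLine (A i)) ∧ ∀ j, IsASMLine (Aᵀ j) := by
  constructor
  · rintro ⟨hA, hrow, hcol, hrowSum, hcolSum⟩
    exact ⟨hA, fun i => ⟨hrow i, hrowSum i⟩, fun j => ⟨fun i => hcol i j, hcolSum j⟩⟩
  · rintro ⟨hA, hrow, hcol⟩
    exact ⟨hA, fun i => (hrow i).1, fun i j => (hcol j).1 i, fun i => (hrow i).2,
      fun j => (hcol j).2⟩

lemma isASMLine_snoc_zero_iff {n : ℕ} {v : Fin n → ℤ} :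
    IsASMLine (Fin.snoc v 0 : Fin (n + 1) → ℤ) ↔ IsASMLine v := by
  simp +contextual [IsASMLine, Fin.forall_fin_succ', Fin.sum_Iic_castSucc, Fin.Iic_last,
    Fin.sum_univ_castSucc]

lemma isASMLine_snoc_zero_one (n : ℕ) : IsASMLine (Fin.snoc 0 1 : Fin (n + 1) → ℤ) := by
  simp [IsASMLine, Fin.forall_fin_succ', Fin.sum_Iic_castSucc, Fin.Iic_last, Fin.sum_univ_castSucc]

lemma IsASMLine.apply_last_eq_zero_or_one {m : ℕ} {v : Fin (m + 1) → ℤ} (hv : IsASMLine v) :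
    v (Fin.last m) = 0 ∨ v (Fin.last m) = 1 := by
  have hsum := hv.2
  rw [Fin.sum_univ_castSucc] at hsum
  cases m with
  | zero => simp_all
  | succ k =>
    have hpartial := hv.1 (Fin.last k).castSucc
    rw [Fin.sum_Iic_castSucc, Fin.Iic_last] at hpartial
    omega

/-- The block matrix `A ⊕ (1)`. -/
def cornerExtend {m : ℕ} (A : Matrix (Fin m) (Fin m) ℤ) : Matrix (Fin (m + 1)) (Fin (m + 1)) ℤ :=
  Fin.snoc (fun i => Fin.snoc (A i) 0) (Fin.snoc 0 1)

section cornerExtend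

variable {m : ℕ} {A : Matrix (Fin m) (Fin m) ℤ}

@[simp] lemma cornerExtend_castSucc_castSucc (i j : Fin m) :
    cornerExtend A i.castSucc j.castSucc = A i j := by
  simp [cornerExtend]

@[simp] lemma cornerExtend_castSucc_last (i : Fin m) :
    cornerExtend A i.castSucc (Fin.last m) = 0 := by
  simp [cornerExtend]

@[simp] lemma cornerExtend_last_castSucc (j : Fin m) :
    cornerExtend A (Fin.last m) j.castSucc = 0 := by
  simp [cornerExtend]

@[simp] lemma cornerExtend_last_last : cornerExtend A (Fin.last m) (Fin.last m) = 1 := by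
  simp [cornerExtend]

lemma transpose_cornerExtend : (cornerExtend A)ᵀ = cornerExtend Aᵀ := by
  ext i j
  cases i using Fin.lastCases <;> cases j using Fin.lastCases <;> simp

lemma cornerExtend_injective : Function.Injective (cornerExtend (m := m)) :=
  fun A B h => funext₂ fun i j => by simpa using congrFun₂ h i.castSucc j.castSucc

@[simp] lemma nuA_cornerExtend : nuA (cornerExtend A) = nuA A := by
  simp [nuA, sum_filter, Fintype.sum_prod_type, Fin.sum_univ_castSucc, not_lt.2 (Fin.le_last _)]

@[simp] lemma muA_cornerExtend : muA (cornerExtend A) = muA A := by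
  simp only [muA, card_filter]
  simp [Fintype.sum_prod_type, Fin.sum_univ_castSucc, -sum_boole]

@[simp] lemma rho1A_cornerExtend [NeZero m] : rho1A (cornerExtend A) = rho1A A := by
  simp only [rho1A, card_filter]
  simp [Fintype.sum_prod_type, Fin.sum_univ_castSucc, Fin.exists_fin_succ',
    not_lt.2 (Fin.le_last _), Fin.castSucc_eq_zero_iff, -sum_boole]

@[simp] lemma rho2A_cornerExtend : rho2A (cornerExtend A) = 0 := by
  simp only [rho2A, card_filter]
  simp [Fintype.sum_prod_type, Fin.sum_univ_castSucc, Fin.exists_fin_succ', Fin.le_last,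
    fun i : Fin m => i.isLt.ne, -sum_boole]

lemma forall_isASMLine_cornerExtend_iff :
    (∀ i, IsASMLine (cornerExtend A i)) ↔ ∀ i, IsASMLine (A i) := by
  simp [Fin.forall_fin_succ', cornerExtend, isASMLine_snoc_zero_iff, isASMLine_snoc_zero_one]

lemma isASM_cornerExtend_iff : IsASM (cornerExtend A) ↔ IsASM A := by
  rw [isASM_iff, isASM_iff, transpose_cornerExtend, forall_isASMLine_cornerExtend_iff,
    forall_isASMLine_cornerExtend_iff]
  simp [Fin.forall_fin_succ']

lemma apply_last_last_eq_one_of_rho2A_eq_zero {B : Matrix (Fin (m + 1)) (Fin (m + 1)) ℤ}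
    (h01 : ∀ j, B (Fin.last m) j = 0 ∨ B (Fin.last m) j = 1) (hsum : ∑ j, B (Fin.last m) j = 1)
    (h : rho2A B = 0) : B (Fin.last m) (Fin.last m) = 1 := by
  refine (h01 _).resolve_left fun h0 => ?_
  obtain ⟨j, hj⟩ : ∃ j, B (Fin.last m) j ≠ 0 := by
    by_contra! hz
    simp [hz] at hsum
  have hjlt : j < Fin.last m := (Fin.le_last j).lt_of_ne (by rintro rfl; exact hj h0)
  rw [rho2A, card_eq_zero, filter_eq_empty_iff] at h
  exact h (mem_univ (Fin.last m, Fin.last m)) ⟨by simp, h0, j, hjlt, (h01 j).resolve_left hj⟩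

lemma IsASM.eq_cornerExtend {B : Matrix (Fin (m + 1)) (Fin (m + 1)) ℤ} (hB : IsASM B)
    (h : rho2A B = 0) : B = cornerExtend (B.submatrix Fin.castSucc Fin.castSucc) := by
  obtain ⟨-, hrow, hcol⟩ := isASM_iff.1 hB
  have hlastRow : ∀ j, B (Fin.last m) j = 0 ∨ B (Fin.last m) j = 1 :=
    fun j => (hcol j).apply_last_eq_zero_or_one
  have hlastCol : ∀ i, B i (Fin.last m) = 0 ∨ B i (Fin.last m) = 1 :=
    fun i => (hrow i).apply_last_eq_zero_or_one
  have hcorner := apply_last_last_eq_one_of_rho2A_eq_zero hlastRow (hrow _).2 h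
  have hrowZero := Fin.apply_castSucc_eq_zero_of_sum_eq_last
    (fun j => by rcases hlastRow j with h | h <;> simp [h]) ((hrow _).2.trans hcorner.symm)
  have hcolZero := Fin.apply_castSucc_eq_zero_of_sum_eq_last (v := fun i => B i (Fin.last m))
    (fun i => by rcases hlastCol i with h | h <;> simp [h]) ((hcol _).2.trans hcorner.symm)
  ext i j
  cases i using Fin.lastCases <;> cases j using Fin.lastCases <;> simp_all

lemma bijOn_cornerExtend :
    Set.BijOn cornerExtend (ASMs m) {B ∈ ASMs (m + 1) | rho2A B = 0} :=
  ⟨fun _ hA => ⟨isASM_cornerExtend_iff.2 hA, rho2A_cornerExtend⟩, cornerExtend_injective.injOn,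
    fun _ ⟨hB, h⟩ =>
      ⟨_, isASM_cornerExtend_iff.1 (hB.eq_cornerExtend h ▸ hB), (hB.eq_cornerExtend h).symm⟩⟩

end cornerExtend

/-- The `(n-1) × (n-1)` ASMs with `ν = p`, `μ = m`, `ρ₁ = k` are equinumerous with the
`n × n` ASMs with `ν = p`, `μ = m`, `ρ₁ = k`, `ρ₂ = 0`; consequently
`Z^ASM_n(x,y,z,0) = Z^ASM_{n-1}(x,y,z,1)`. -/
theorem ASM_z2_zero (n : ℕ) (hn : 2 ≤ n) :
    (∀ p m k : ℤ,
      {A ∈ ASMs (n - 1) | nuA A = p ∧ (muA A : ℤ) = m ∧ (rho1A A : ℤ) = k}.ncard =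
      {A ∈ ASMs n | nuA A = p ∧ (muA A : ℤ) = m ∧ (rho1A A : ℤ) = k ∧
        rho2A A = 0}.ncard) ∧
    (∀ (R : Type) (_ : CommRing R) (x y z : R),
      ZASM2 n x y z 0 = ZASM2 (n - 1) x y z 1) := by
  obtain ⟨k, rfl⟩ : ∃ k, n = k + 2 := ⟨n - 2, by omega⟩
  have hbij : Set.BijOn cornerExtend (ASMs (k + 1)) {B ∈ ASMs (k + 2) | rho2A B = 0} :=
    bijOn_cornerExtend
  refine ⟨fun p μ ρ => ?_, fun R _ x y z => ?_⟩
  · refine Set.ncard_congr (fun A _ => cornerExtend A) ?_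
      (fun A _ B _ => (cornerExtend_injective ·)) ?_
    · rintro A ⟨hA, hstat⟩
      exact ⟨isASM_cornerExtend_iff.2 hA, by simpa using hstat⟩
    · rintro B ⟨hB, hν, hμ, hρ₁, hρ₂⟩
      obtain ⟨A, hA, rfl⟩ := hbij.surjOn ⟨hB, hρ₂⟩
      exact ⟨A, ⟨hA, by simp_all⟩, rfl⟩
  · simp only [ZASM2, one_pow, mul_one, finsum_mem_mul_zero_pow]
    exact (finsum_mem_eq_of_bijOn _ hbij fun A _ => by simp).symm

end ASMDPP
end

section
/- For every integer n ≥ 2 and all integers p, m, k, the number of descending plane partitions D with each part at most n−1 satisfying ν(D) = p, μ(D) = m and ρ₁(D) = k equals the number of descending plane partitions D with each part at most n satisfying ν(D) = p, μ(D) = m, ρ₁(D) = k and ρ₂(D) = 0. Consequently Z^DPP_n(x,y,z,0) = Z^DPP_{n−1}(x,y,z,1). -/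
/-!
In a DPP with parts at most `n - 1` every row is shorter than its diagonal entry, so all row
lengths are at most `n - 2`. Raising every part `n - 1` to `n` is strictly increasing on
`[0, n - 1]` and changes no comparison between a part and a number `≤ n - 2`; hence it keeps the
DPP conditions and `ν`, `μ`, turns `ρ₁` for `n - 1` into `ρ₁` for `n`, and produces a DPP with no
part `n - 1` and no row of length `n - 1`, i.e. with `ρ₂ = 0`. On DPPs with `ρ₂ = 0`, lowering
every part `n` to `n - 1` is a relabelling of the same kind and inverts the first map. Finally
`0 ^ ρ₂` keeps exactly the terms with `ρ₂ = 0`.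
-/

namespace ASMDPP

/-- The part of `D` in row `i`, offset `k` (both 0-indexed); this is the part
`D_{i+1, i+1+k}` (in column `j = i + 1 + k`) of the descending plane partition,
and `0` if absent. -/
def dppPart (D : List (List ℕ)) (i k : ℕ) : ℕ := (D.getD i []).getD k 0

/-- `D` is a descending plane partition with all parts at most `n`, presented as the
list of its rows: row `i` (1-indexed) occupies columns `i, …, i + λ_i - 1` and is
recorded as a list of length `λ_i`.  The conditions are: rows are nonempty lists of
parts `1 ≤ a ≤ n`, weakly decreasing along each row; parts strictly decrease down
columns; and `D_{ii} > λ_i ≥ D_{i+1,i+1}` for each row `i`. -/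
def IsDPP (n : ℕ) (D : List (List ℕ)) : Prop :=
  (∀ r ∈ D, r ≠ [] ∧ r.Chain' (· ≥ ·) ∧ ∀ a ∈ r, 1 ≤ a ∧ a ≤ n) ∧
  (∀ i k, dppPart D (i + 1) k ≠ 0 → dppPart D (i + 1) k < dppPart D i (k + 1)) ∧
  (∀ i, i < D.length → (D.getD i []).length < dppPart D i 0) ∧
  (∀ i, dppPart D (i + 1) 0 ≤ (D.getD i []).length)

/-- The set of descending plane partitions with each part at most `n`. -/
def DPPs (n : ℕ) : Set (List (List ℕ)) := {D | IsDPP n D}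

/-- `ν(D)`: the number of nonspecial parts of `D`, i.e. parts with `D_{ij} > j - i`
(the part at offset `k` of a row lies in column `j = i + k`, so this reads `part > k`). -/
def nuD (D : List (List ℕ)) : ℕ :=
  ∑ i ∈ Finset.range D.length,
    ((Finset.range (D.getD i []).length).filter (fun k => k < dppPart D i k)).card

/-- `μ(D)`: the number of special parts of `D`, i.e. parts with `D_{ij} ≤ j - i`. -/
def muD (D : List (List ℕ)) : ℕ :=
  ∑ i ∈ Finset.range D.length,
    ((Finset.range (D.getD i []).length).filter (fun k => dppPart D i k ≤ k)).card

/-- `ρ₁(D)`: the number of parts of `D` equal to `n`. -/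
def rho1D (n : ℕ) (D : List (List ℕ)) : ℕ := (D.map fun r => r.count n).sum

/-- `ρ₂(D)`: the number of parts of `D` equal to `n - 1` plus the number of rows of `D`
of length `n - 1`. -/
def rho2D (n : ℕ) (D : List (List ℕ)) : ℕ :=
  (D.map fun r => r.count (n - 1)).sum + (D.filter fun r => r.length = n - 1).length

/-- The doubly-refined DPP generating function `Z^DPP_n(x,y,z₁,z₂)`. -/
noncomputable def ZDPP2 {R : Type*} [CommRing R] (n : ℕ) (x y z₁ z₂ : R) : R :=
  ∑ᶠ D ∈ DPPs n, x ^ nuD D * y ^ muD D * z₁ ^ rho1D n D * z₂ ^ rho2D n D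

/-- The singly-refined DPP generating function `Z^DPP_n(x,y,z) = Z^DPP_n(x,y,z,1)`. -/
noncomputable def ZDPP1 {R : Type*} [CommRing R] (n : ℕ) (x y z : R) : R :=
  ZDPP2 n x y z 1

theorem _root_.Set.BijOn.ncard_sep_eq {α β : Type*} {f : α → β} {s : Set α} {t : Set β}
    (h : Set.BijOn f s t) {p : α → Prop} {q : β → Prop} (hqt : {y | q y} ⊆ t)
    (hpq : ∀ x ∈ s, q (f x) ↔ p x) : {x ∈ s | p x}.ncard = {y | q y}.ncard := by
  have hsep : s ∩ f ⁻¹' {y | q y} = {x ∈ s | p x} := by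
    ext x
    exact ⟨fun ⟨hx, hq⟩ => ⟨hx, (hpq x hx).1 hq⟩, fun ⟨hx, hp⟩ => ⟨hx, (hpq x hx).2 hp⟩⟩
  rw [← hsep]
  exact (h.subset_right hqt).ncard_eq

def mapParts (f : ℕ → ℕ) (D : List (List ℕ)) : List (List ℕ) := D.map (List.map f)

section mapParts

variable {f g : ℕ → ℕ} {D : List (List ℕ)}

@[simp]
theorem length_mapParts : (mapParts f D).length = D.length := List.length_map _

theorem getD_mapParts (i : ℕ) : (mapParts f D).getD i [] = (D.getD i []).map f := by
  simp only [mapParts, List.getD_eq_getElem?_getD, List.getElem?_map]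
  cases D[i]? <;> rfl

theorem dppPart_mapParts (hf : f 0 = 0) (i k : ℕ) :
    dppPart (mapParts f D) i k = f (dppPart D i k) := by
  rw [dppPart, dppPart, getD_mapParts]
  generalize D.getD i [] = r
  simp only [List.getD_eq_getElem?_getD, List.getElem?_map]
  cases r[k]? <;> simp [hf]

theorem mapParts_mapParts : mapParts g (mapParts f D) = mapParts (g ∘ f) D := by
  simp [mapParts, Function.comp_def]

theorem mapParts_eq_self (h : ∀ r ∈ D, ∀ a ∈ r, f a = a) : mapParts f D = D := by
  refine (List.map_congr_left fun r hr => ?_).trans (List.map_id D)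
  exact (List.map_congr_left (h r hr)).trans (List.map_id r)

end mapParts

theorem getD_mem {D : List (List ℕ)} {i : ℕ} (hi : i < D.length) : D.getD i [] ∈ D := by
  rw [List.getD_eq_getElem _ _ hi]
  exact List.getElem_mem hi

theorem dppPart_eq_zero_or_mem (D : List (List ℕ)) (i k : ℕ) :
    dppPart D i k = 0 ∨ ∃ r ∈ D, dppPart D i k ∈ r := by
  rw [dppPart]
  rcases Nat.lt_or_ge i D.length with hi | hi
  · rcases Nat.lt_or_ge k (D.getD i []).length with hk | hk
    · exact .inr ⟨_, getD_mem hi, by rw [List.getD_eq_getElem _ _ hk]; exact List.getElem_mem hk⟩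
    · exact .inl (List.getD_eq_default _ _ hk)
  · rw [List.getD_eq_default _ _ hi]
    simp

section IsDPP

variable {n : ℕ} {D : List (List ℕ)}

theorem IsDPP.le_of_mem (hD : IsDPP n D) {r : List ℕ} (hr : r ∈ D) {a : ℕ} (ha : a ∈ r) :
    a ≤ n :=
  ((hD.1 r hr).2.2 a ha).2

theorem IsDPP.dppPart_le (hD : IsDPP n D) (i k : ℕ) : dppPart D i k ≤ n := by
  rcases dppPart_eq_zero_or_mem D i k with h | ⟨r, hr, ha⟩
  · omega
  · exact hD.le_of_mem hr ha

theorem IsDPP.length_lt (hD : IsDPP n D) {r : List ℕ} (hr : r ∈ D) : r.length < n := by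
  obtain ⟨i, hi, rfl⟩ := List.getElem_of_mem hr
  have := hD.2.2.1 i hi
  rw [List.getD_eq_getElem _ _ hi] at this
  exact this.trans_le (hD.dppPart_le i 0)

end IsDPP

theorem rho1D_mapParts {f : ℕ → ℕ} {D : List (List ℕ)} {n n' : ℕ}
    (h : ∀ r ∈ D, ∀ a ∈ r, f a = n' ↔ a = n) : rho1D n' (mapParts f D) = rho1D n D := by
  simp only [rho1D, mapParts, List.map_map]
  congr 1
  refine List.map_congr_left fun r hr => ?_
  simp only [Function.comp_apply, List.count_eq_countP, List.countP_map]
  exact List.countP_congr fun a ha => by simpa using h r hr a ha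

theorem rho2D_eq_zero_iff {n : ℕ} {D : List (List ℕ)} :
    rho2D n D = 0 ↔ ∀ r ∈ D, n - 1 ∉ r ∧ r.length ≠ n - 1 := by
  simp [rho2D, List.sum_eq_zero_iff, List.filter_eq_nil_iff, List.count_eq_zero, forall_and]

/-- `f` changes the parts of `D` (all in `V`) without changing any comparison between two parts
or between a part and a number `j ≤ L`, where `L` bounds the row lengths. These are the only
comparisons the DPP conditions and `ν`, `μ` make. -/
structure IsRelabelling (f : ℕ → ℕ) (V : Set ℕ) (L : ℕ) (D : List (List ℕ)) : Prop where
  zero_mem : 0 ∈ V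
  map_zero : f 0 = 0
  mem_of_mem : ∀ r ∈ D, ∀ a ∈ r, a ∈ V
  strictMonoOn : StrictMonoOn f V
  length_le : ∀ r ∈ D, r.length ≤ L
  lt_map_iff : ∀ a ∈ V, ∀ j ≤ L, j < f a ↔ j < a

namespace IsRelabelling

variable {f : ℕ → ℕ} {V : Set ℕ} {L : ℕ} {D : List (List ℕ)}

theorem dppPart_mem (h : IsRelabelling f V L D) (i k : ℕ) : dppPart D i k ∈ V := by
  rcases dppPart_eq_zero_or_mem D i k with h0 | ⟨r, hr, ha⟩
  · exact h0 ▸ h.zero_mem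
  · exact h.mem_of_mem r hr _ ha

theorem length_getD_le (h : IsRelabelling f V L D) (i : ℕ) : (D.getD i []).length ≤ L := by
  rcases Nat.lt_or_ge i D.length with hi | hi
  · exact h.length_le _ (getD_mem hi)
  · rw [List.getD_eq_default _ _ hi]
    simp

theorem lt_dppPart_mapParts_iff (h : IsRelabelling f V L D) {j : ℕ} (hj : j ≤ L) (i k : ℕ) :
    j < dppPart (mapParts f D) i k ↔ j < dppPart D i k := by
  rw [dppPart_mapParts h.map_zero]
  exact h.lt_map_iff _ (h.dppPart_mem i k) j hj

theorem isDPP {m n : ℕ} (h : IsRelabelling f V L D) (hD : IsDPP m D)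
    (hf : ∀ a ∈ V, f a ≤ n) : IsDPP n (mapParts f D) := by
  have hpart := dppPart_mapParts (D := D) h.map_zero
  have hlen : ∀ i, ((mapParts f D).getD i []).length = (D.getD i []).length := fun i => by
    rw [getD_mapParts, List.length_map]
  refine ⟨?_, fun i k hk => ?_, fun i hi => ?_, fun i => ?_⟩
  · simp only [mapParts, List.mem_map]
    rintro _ ⟨r, hr, rfl⟩
    obtain ⟨hne, hchain, hbound⟩ := hD.1 r hr
    refine ⟨by simpa using hne, ?_, ?_⟩
    · refine (List.isChain_map f).2 (hchain.imp_of_mem_imp fun a b ha hb hab => ?_)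
      exact h.strictMonoOn.monotoneOn (h.mem_of_mem r hr b hb) (h.mem_of_mem r hr a ha) hab
    · simp only [List.mem_map]
      rintro _ ⟨a, ha, rfl⟩
      have haV := h.mem_of_mem r hr a ha
      exact ⟨(h.lt_map_iff a haV 0 (Nat.zero_le L)).2 (hbound a ha).1, hf a haV⟩
  · rw [hpart] at hk
    rw [hpart, hpart]
    have hk0 : dppPart D (i + 1) k ≠ 0 := fun h0 => hk (h0 ▸ h.map_zero)
    exact h.strictMonoOn (h.dppPart_mem _ _) (h.dppPart_mem _ _) (hD.2.1 i k hk0)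
  · rw [length_mapParts] at hi
    rw [hlen, h.lt_dppPart_mapParts_iff (h.length_getD_le i)]
    exact hD.2.2.1 i hi
  · rw [hlen, ← not_lt, h.lt_dppPart_mapParts_iff (h.length_getD_le i), not_lt]
    exact hD.2.2.2 i

theorem nuD_mapParts (h : IsRelabelling f V L D) : nuD (mapParts f D) = nuD D := by
  simp only [nuD, length_mapParts, getD_mapParts, List.length_map]
  refine Finset.sum_congr rfl fun i _ => congrArg Finset.card <|
    Finset.filter_congr fun k hk => ?_
  have hk : k ≤ L := (Finset.mem_range.1 hk).le.trans (h.length_getD_le i)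
  exact h.lt_dppPart_mapParts_iff hk i k

theorem muD_mapParts (h : IsRelabelling f V L D) : muD (mapParts f D) = muD D := by
  simp only [muD, length_mapParts, getD_mapParts, List.length_map]
  refine Finset.sum_congr rfl fun i _ => congrArg Finset.card <|
    Finset.filter_congr fun k hk => ?_
  have hk : k ≤ L := (Finset.mem_range.1 hk).le.trans (h.length_getD_le i)
  rw [← not_lt, ← not_lt]
  exact not_congr (h.lt_dppPart_mapParts_iff hk i k)

end IsRelabelling

def raisePart (n a : ℕ) : ℕ := if a = n - 1 then n else a

def lowerPart (n a : ℕ) : ℕ := if a = n then n - 1 else a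

section raiseLower

variable {n : ℕ} {D : List (List ℕ)}

theorem isRelabelling_raisePart (hn : 2 ≤ n) (hD : IsDPP (n - 1) D) :
    IsRelabelling (raisePart n) (Set.Iic (n - 1)) (n - 2) D where
  zero_mem := Nat.zero_le _
  map_zero := if_neg (by omega)
  mem_of_mem _ hr _ ha := hD.le_of_mem hr ha
  strictMonoOn a ha b hb hab := by
    simp only [Set.mem_Iic] at ha hb
    unfold raisePart
    split_ifs <;> omega
  length_le r hr := by have := hD.length_lt hr; omega
  lt_map_iff a ha j hj := by
    simp only [Set.mem_Iic] at ha
    unfold raisePart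
    split_ifs <;> omega

theorem isRelabelling_lowerPart (hn : 2 ≤ n) (hD : IsDPP n D) (h₂ : rho2D n D = 0) :
    IsRelabelling (lowerPart n) {a | a ≤ n ∧ a ≠ n - 1} (n - 2) D where
  zero_mem := ⟨Nat.zero_le _, by omega⟩
  map_zero := if_neg (by omega)
  mem_of_mem r hr a ha :=
    ⟨hD.le_of_mem hr ha, fun h => (rho2D_eq_zero_iff.1 h₂ r hr).1 (h ▸ ha)⟩
  strictMonoOn a ha b hb hab := by
    obtain ⟨ha, ha'⟩ := ha
    obtain ⟨hb, hb'⟩ := hb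
    unfold lowerPart
    split_ifs <;> omega
  length_le r hr := by
    have := hD.length_lt hr
    have := (rho2D_eq_zero_iff.1 h₂ r hr).2
    omega
  lt_map_iff a ha j hj := by
    obtain ⟨ha, ha'⟩ := ha
    unfold lowerPart
    split_ifs <;> omega

theorem lowerPart_raisePart {a : ℕ} (ha : a ≤ n - 1) : lowerPart n (raisePart n a) = a := by
  unfold lowerPart raisePart
  split_ifs <;> omega

theorem raisePart_lowerPart {a : ℕ} (ha : a ≠ n - 1) : raisePart n (lowerPart n a) = a := by
  unfold lowerPart raisePart
  split_ifs <;> omega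

theorem rho1D_mapParts_raisePart (hD : IsDPP (n - 1) D) :
    rho1D n (mapParts (raisePart n) D) = rho1D (n - 1) D :=
  rho1D_mapParts fun r hr a ha => by
    have := hD.le_of_mem hr ha
    unfold raisePart
    split_ifs <;> omega

theorem rho2D_mapParts_raisePart (hD : IsDPP (n - 1) D) :
    rho2D n (mapParts (raisePart n) D) = 0 := by
  refine rho2D_eq_zero_iff.2 fun r hr => ?_
  simp only [mapParts, List.mem_map] at hr
  obtain ⟨r, hr, rfl⟩ := hr
  have := hD.length_lt hr
  refine ⟨fun h => ?_, by rw [List.length_map]; omega⟩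
  obtain ⟨a, ha, hna⟩ := List.mem_map.1 h
  have := hD.le_of_mem hr ha
  unfold raisePart at hna
  split_ifs at hna <;> omega

theorem bijOn_mapParts_raisePart (hn : 2 ≤ n) :
    Set.BijOn (mapParts (raisePart n)) (DPPs (n - 1)) {D ∈ DPPs n | rho2D n D = 0} := by
  refine Set.InvOn.bijOn (f' := mapParts (lowerPart n)) ⟨fun D hD => ?_, fun D hD => ?_⟩
    (fun D hD => ⟨?_, ?_⟩) (fun D hD => ?_)
  · rw [mapParts_mapParts]
    exact mapParts_eq_self fun r hr a ha => lowerPart_raisePart (hD.le_of_mem hr ha)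
  · rw [mapParts_mapParts]
    exact mapParts_eq_self fun r hr a ha =>
      raisePart_lowerPart fun h => (rho2D_eq_zero_iff.1 hD.2 r hr).1 (h ▸ ha)
  · refine (isRelabelling_raisePart hn hD).isDPP hD fun a (ha : a ≤ n - 1) => ?_
    unfold raisePart
    split_ifs <;> omega
  · exact rho2D_mapParts_raisePart hD
  · refine (isRelabelling_lowerPart hn hD.1 hD.2).isDPP hD.1 fun a ⟨ha, _⟩ => ?_
    unfold lowerPart
    split_ifs <;> omega

end raiseLower

theorem ZDPP2_zero {R : Type*} [CommRing R] (n : ℕ) (x y z : R) :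
    ZDPP2 n x y z 0 =
      ∑ᶠ D ∈ {D ∈ DPPs n | rho2D n D = 0}, x ^ nuD D * y ^ muD D * z ^ rho1D n D := by
  rw [ZDPP2, finsum_mem_inter_support_eq' _ _ {D ∈ DPPs n | rho2D n D = 0} fun D hD => ?_]
  · refine finsum_mem_congr rfl fun D hD => ?_
    rw [hD.2, pow_zero, mul_one]
  · have h₂ : rho2D n D = 0 := by
      by_contra h
      exact hD (by simp [zero_pow h])
    simp [h₂]

/-- The DPPs with each part at most `n - 1` and `ν = p`, `μ = m`, `ρ₁ = k` are
equinumerous with the DPPs with each part at most `n` and `ν = p`, `μ = m`, `ρ₁ = k`,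
`ρ₂ = 0`; consequently `Z^DPP_n(x,y,z,0) = Z^DPP_{n-1}(x,y,z,1)`. -/
theorem DPP_z2_zero (n : ℕ) (hn : 2 ≤ n) :
    (∀ p m k : ℤ,
      {D ∈ DPPs (n - 1) | (nuD D : ℤ) = p ∧ (muD D : ℤ) = m ∧
        (rho1D (n - 1) D : ℤ) = k}.ncard =
      {D ∈ DPPs n | (nuD D : ℤ) = p ∧ (muD D : ℤ) = m ∧ (rho1D n D : ℤ) = k ∧
        rho2D n D = 0}.ncard) ∧
    (∀ (R : Type) (_ : CommRing R) (x y z : R),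
      ZDPP2 n x y z 0 = ZDPP2 (n - 1) x y z 1) := by
  have hbij := bijOn_mapParts_raisePart hn
  have hstats : ∀ D ∈ DPPs (n - 1),
      nuD (mapParts (raisePart n) D) = nuD D ∧ muD (mapParts (raisePart n) D) = muD D ∧
        rho1D n (mapParts (raisePart n) D) = rho1D (n - 1) D := fun D hD =>
    ⟨(isRelabelling_raisePart hn hD).nuD_mapParts, (isRelabelling_raisePart hn hD).muD_mapParts,
      rho1D_mapParts_raisePart hD⟩
  refine ⟨fun p m k => ?_, fun R _ x y z => ?_⟩
  · refine hbij.ncard_sep_eq (fun D hD => ⟨hD.1, hD.2.2.2.2⟩) fun D hD => ?_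
    obtain ⟨hν, hμ, hρ₁⟩ := hstats D hD
    obtain ⟨hF, hρ₂⟩ := hbij.mapsTo hD
    simp [hν, hμ, hρ₁, hρ₂, hF]
  · rw [ZDPP2_zero, ZDPP2]
    refine (finsum_mem_eq_of_bijOn _ hbij fun D hD => ?_).symm
    obtain ⟨hν, hμ, hρ₁⟩ := hstats D hD
    rw [hν, hμ, hρ₁, one_pow, mul_one]

end ASMDPP
end

section
/- For every integer n ≥ 1 and all elements x, y, z₁, z₂ of a commutative ring, the doubly-refined ASM generating function is symmetric in its last two arguments: Z^ASM_n(x,y,z₁,z₂) = Z^ASM_n(x,y,z₂,z₁). Equivalently, for all integers p, m, k₁, k₂, the number of n×n alternating sign matrices A with ν(A) = p, μ(A) = m, ρ₁(A) = k₁, ρ₂(A) = k₂ equals the number with ν(A) = p, μ(A) = m, ρ₁(A) = k₂, ρ₂(A) = k₁. -/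
namespace ASMDPP

/-!
Rotating a matrix by 180° maps ASMs to ASMs: entries are unchanged, and a suffix sum of a row
or column is `1` minus a prefix sum, so it again lies in `{0, 1}`. The rotation preserves the
inversion number `ν` and the number `μ` of `-1`'s, and turns the first row into the reversed last
row, so it exchanges `ρ₁` and `ρ₂`. Being an involution, it is a bijection of `ASM(n)` realizing
the symmetry.
-/

section Rotation

variable {n : ℕ}

def rot180 {α : Type*} (A : Matrix (Fin n) (Fin n) α) : Matrix (Fin n) (Fin n) α :=
  A.submatrix Fin.rev Fin.rev

@[simp]
lemma rot180_apply {α : Type*} (A : Matrix (Fin n) (Fin n) α) (i j : Fin n) :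
    rot180 A i j = A i.rev j.rev := rfl

lemma rot180_involutive {α : Type*} : Function.Involutive (rot180 (n := n) (α := α)) := by
  intro A; ext i j; simp

lemma sum_Iic_comp_rev {M : Type*} [AddCommGroup M] (f : Fin n → M) (j : Fin n) :
    ∑ j' ∈ Finset.Iic j, f j'.rev = ∑ j', f j' - ∑ j' ∈ Finset.Iio j.rev, f j' := by
  have hcompl : (Finset.Iio j.rev)ᶜ = Finset.Ici j.rev := by ext; simp
  calc ∑ j' ∈ Finset.Iic j, f j'.rev = ∑ j' ∈ Finset.Ici j.rev, f j' := by
        rw [← Fin.map_revPerm_Iic, Finset.sum_map]; rfl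
    _ = _ := by rw [eq_sub_iff_add_eq, ← hcompl, Finset.sum_compl_add_sum]

lemma sum_Iio_eq_zero_or_one {f : Fin n → ℤ}
    (hf : ∀ j, ∑ j' ∈ Finset.Iic j, f j' = 0 ∨ ∑ j' ∈ Finset.Iic j, f j' = 1) (k : Fin n) :
    ∑ j' ∈ Finset.Iio k, f j' = 0 ∨ ∑ j' ∈ Finset.Iio k, f j' = 1 := by
  have := k.neZero
  rcases eq_or_ne k 0 with rfl | hk
  · left; rw [← bot_eq_zero, Finset.Iio_bot, Finset.sum_empty]
  · rw [← Fin.Iic_sub_one_eq_Iio (Fin.pos_iff_ne_zero.mpr hk)]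
    exact hf _

lemma sum_Iic_comp_rev_eq_zero_or_one {f : Fin n → ℤ} (hsum : ∑ j, f j = 1)
    (hf : ∀ j, ∑ j' ∈ Finset.Iic j, f j' = 0 ∨ ∑ j' ∈ Finset.Iic j, f j' = 1) (j : Fin n) :
    ∑ j' ∈ Finset.Iic j, f j'.rev = 0 ∨ ∑ j' ∈ Finset.Iic j, f j'.rev = 1 := by
  rw [sum_Iic_comp_rev, hsum]
  rcases sum_Iio_eq_zero_or_one hf j.rev with h | h <;> omega

lemma IsASM.rot180 {A : Matrix (Fin n) (Fin n) ℤ} (hA : IsASM A) : IsASM (rot180 A) := by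
  obtain ⟨hentries, hrow, hcol, hrowsum, hcolsum⟩ := hA
  refine ⟨fun i j => hentries _ _, fun i => ?_, fun i j => ?_, fun i => ?_, fun j => ?_⟩
  · exact sum_Iic_comp_rev_eq_zero_or_one (hrowsum i.rev) (hrow i.rev)
  · exact sum_Iic_comp_rev_eq_zero_or_one (hcolsum j.rev) (fun i => hcol i j.rev) i
  · exact (Equiv.sum_comp Fin.revPerm fun j => A i.rev j).trans (hrowsum i.rev)
  · exact (Equiv.sum_comp Fin.revPerm fun i => A i j.rev).trans (hcolsum j.rev)

lemma rot180_bijOn_ASMs : Set.BijOn rot180 (ASMs n) (ASMs n) :=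
  Set.InvOn.bijOn ⟨fun A _ => rot180_involutive A, fun A _ => rot180_involutive A⟩
    (fun _ => IsASM.rot180) (fun _ => IsASM.rot180)

lemma rot180_mem_ASMs_iff {A : Matrix (Fin n) (Fin n) ℤ} : rot180 A ∈ ASMs n ↔ A ∈ ASMs n :=
  ⟨fun h => rot180_involutive A ▸ IsASM.rot180 h, IsASM.rot180⟩

-- The two entries of an inversion pair trade places under the rotation.
lemma nuA_rot180 (A : Matrix (Fin n) (Fin n) ℤ) : nuA (rot180 A) = nuA A := by
  let σ : (Fin n × Fin n) × Fin n × Fin n → (Fin n × Fin n) × Fin n × Fin n :=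
    fun p => ((p.2.1.rev, p.2.2.rev), (p.1.1.rev, p.1.2.rev))
  refine Finset.sum_nbij' σ σ ?_ ?_ ?_ ?_ ?_ <;> simp [σ, Fin.rev_lt_rev, Fin.rev_le_rev, mul_comm]

lemma muA_rot180 (A : Matrix (Fin n) (Fin n) ℤ) : muA (rot180 A) = muA A :=
  Finset.card_equiv (Fin.revPerm.prodCongr Fin.revPerm) fun p => by
    rw [Finset.mem_filter, Finset.mem_filter]; simp

lemma rho1A_rot180 (A : Matrix (Fin n) (Fin n) ℤ) : rho1A (rot180 A) = rho2A A := by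
  refine Finset.card_equiv (Fin.revPerm.prodCongr Fin.revPerm) fun p => ?_
  have hrow : (p.1.rev : ℕ) = n - 1 ↔ (p.1 : ℕ) = 0 := by
    have := p.1.isLt; rw [Fin.val_rev]; omega
  rw [Finset.mem_filter, Finset.mem_filter]
  simp only [Finset.mem_univ, true_and, rot180_apply, Equiv.prodCongr_apply, Prod.map_fst,
    Prod.map_snd, Fin.revPerm_apply, hrow]
  conv_rhs => rw [Fin.rev_surjective.exists]
  simp only [Fin.rev_lt_rev]

lemma rho2A_rot180 (A : Matrix (Fin n) (Fin n) ℤ) : rho2A (rot180 A) = rho1A A := by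
  simpa only [rot180_involutive A] using (rho1A_rot180 (rot180 A)).symm

end Rotation

theorem ZASM2_symm_general {R : Type*} [CommRing R] (n : ℕ) :
    (∀ x y z₁ z₂ : R, ZASM2 n x y z₁ z₂ = ZASM2 n x y z₂ z₁) ∧
    (∀ p m k₁ k₂ : ℤ,
      {A ∈ ASMs n | nuA A = p ∧ (muA A : ℤ) = m ∧ (rho1A A : ℤ) = k₁ ∧
        (rho2A A : ℤ) = k₂}.ncard =
      {A ∈ ASMs n | nuA A = p ∧ (muA A : ℤ) = m ∧ (rho1A A : ℤ) = k₂ ∧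
        (rho2A A : ℤ) = k₁}.ncard) := by
  refine ⟨fun x y z₁ z₂ => ?_, fun p m k₁ k₂ => ?_⟩
  · refine finsum_mem_eq_of_bijOn rot180 rot180_bijOn_ASMs fun A _ => ?_
    rw [nuA_rot180, muA_rot180, rho1A_rot180, rho2A_rot180]
    ring
  · rw [← Set.ncard_preimage_of_injective_subset_range rot180_involutive.injective
      (rot180_involutive.surjective.range_eq ▸ Set.subset_univ _)]
    congr 1
    ext A
    simp only [Set.mem_preimage, Set.mem_ofPred_eq, rot180_mem_ASMs_iff, nuA_rot180, muA_rot180,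
      rho1A_rot180, rho2A_rot180]
    tauto

/-- The doubly-refined ASM generating function is symmetric in `z₁` and `z₂`;
equivalently, the joint distribution of `(ν, μ, ρ₁, ρ₂)` on `ASM(n)` is symmetric
under exchanging the values of `ρ₁` and `ρ₂`. -/
theorem ZASM2_symm {R : Type*} [CommRing R] (n : ℕ) (hn : 1 ≤ n) :
    (∀ x y z₁ z₂ : R, ZASM2 n x y z₁ z₂ = ZASM2 n x y z₂ z₁) ∧
    (∀ p m k₁ k₂ : ℤ,
      {A ∈ ASMs n | nuA A = p ∧ (muA A : ℤ) = m ∧ (rho1A A : ℤ) = k₁ ∧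
        (rho2A A : ℤ) = k₂}.ncard =
      {A ∈ ASMs n | nuA A = p ∧ (muA A : ℤ) = m ∧ (rho1A A : ℤ) = k₂ ∧
        (rho2A A : ℤ) = k₁}.ncard) :=
  ZASM2_symm_general n

end ASMDPP
end

section
/- Desnanot–Jacobi identity: for any n×n matrix M with entries in a commutative ring (n ≥ 2), any row indices 1 ≤ i₁ < i₂ ≤ n and column indices 1 ≤ j₁ < j₂ ≤ n, one has det(M) · det(M with rows i₁,i₂ and columns j₁,j₂ deleted) = det(M with row i₁ and column j₁ deleted) · det(M with row i₂ and column j₂ deleted) − det(M with row i₁ and column j₂ deleted) · det(M with row i₂ and column j₁ deleted). -/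
/-!
Over an integral domain with `det A ≠ 0` one compares two expressions for `det A * det B`, where
`B` is the identity matrix with columns `b₁, b₂` replaced by columns `a₁, a₂` of `adj A`. On
one hand `det B` is the `2 × 2` minor of `adj A` in rows `b₁, b₂` and columns `a₁, a₂`. On the
other hand `A * B` is `A` with columns `b₁, b₂` replaced by `det A • e_{a₁}, det A • e_{a₂}`,
whose determinant is `(det A)²` times a signed complementary minor. Cancelling one `det A`
gives Jacobi's formula for `2 × 2` minors of the adjugate; it transfers to every commutative
ring through the generic matrix over `ℤ[X_ij]`. Expanding the four adjugate entries as signed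
`(n - 1)`-minors gives the Desnanot–Jacobi identity.
-/

namespace ASMDPP

/-- The determinant of the square submatrix of `M` whose rows and columns are those
listed (in order) in `rows` and `cols` (always lists of the same length here). -/
def detOn {R : Type*} [CommRing R] (M : ℕ → ℕ → R) (rows cols : List ℕ) : R :=
  Matrix.det (Matrix.of fun i j : Fin rows.length => M (rows.getD i 0) (cols.getD j 0))

end ASMDPP

namespace List

theorem range'_eq_ofFn (s n : ℕ) : range' s n = ofFn fun t : Fin n => s + t :=
  ext_getElem (by simp) fun _ _ _ => by simp

theorem filter_ne_ofFn_of_injective {α : Type*} [DecidableEq α] {m : ℕ}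
    {f : Fin (m + 1) → α} (hf : Function.Injective f) (p : Fin (m + 1)) :
    (ofFn f).filter (· ≠ f p) = ofFn (f ∘ p.succAbove) := by
  induction m with
  | zero =>
    obtain rfl := Fin.fin_one_eq_zero p
    simp [ofFn_succ]
  | succ m ih =>
    rw [ofFn_succ, filter_cons]
    cases p using Fin.cases with
    | zero =>
      simp only [ne_eq, not_true_eq_false, decide_false, Bool.false_eq_true, if_false,
        Fin.succAbove_zero]
      refine filter_eq_self.2 fun a ha => ?_
      obtain ⟨t, rfl⟩ := mem_ofFn.1 ha
      simpa using hf.ne (Fin.succ_ne_zero t)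
    | succ q =>
      rw [if_pos (by simpa using hf.ne (Fin.succ_ne_zero q).symm), ofFn_succ (f := f ∘ _)]
      simp only [Function.comp_apply, Fin.succ_succAbove_zero, Fin.succ_succAbove_succ]
      exact congrArg _ (ih (hf.comp (Fin.succ_injective _)) q)

theorem filter_ne_and_ne_ofFn_of_injective {α : Type*} [DecidableEq α] {m : ℕ}
    {f : Fin (m + 2) → α} (hf : Function.Injective f) {p q : Fin (m + 2)} (hpq : p < q) :
    (ofFn f).filter (fun r => r ≠ f p ∧ r ≠ f q) =
      ofFn (f ∘ p.succAbove ∘ (q.pred (Fin.ne_zero_of_lt hpq)).succAbove) := by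
  have hq : f q = (f ∘ p.succAbove) (q.pred (Fin.ne_zero_of_lt hpq)) := by
    rw [Function.comp_apply, Fin.succAbove_pred_of_lt _ _ hpq]
  rw [← Function.comp_assoc,
    ← filter_ne_ofFn_of_injective (hf.comp Fin.succAbove_right_injective), ← hq,
    ← filter_ne_ofFn_of_injective hf, filter_filter]
  congr 1
  funext r
  simp [Bool.and_comm]

end List

namespace Matrix

section Adjugate

variable {n R : Type*} [Fintype n] [DecidableEq n] [CommRing R]

theorem det_updateCol_updateCol_one {b₁ b₂ : n} (h : b₁ ≠ b₂) (u v : n → R) :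
    (((1 : Matrix n n R).updateCol b₁ u).updateCol b₂ v).det = u b₁ * v b₂ - v b₁ * u b₂ := by
  let U : Matrix n (Fin 2) R :=
    of fun x => ![u x - (Pi.single b₁ 1 : n → R) x, v x - (Pi.single b₂ 1 : n → R) x]
  let V : Matrix (Fin 2) n R := of ![(Pi.single b₁ 1 : n → R), Pi.single b₂ 1]
  have hUV : ((1 : Matrix n n R).updateCol b₁ u).updateCol b₂ v = 1 + U * V := by
    ext x y
    rcases eq_or_ne y b₂ with rfl | hy₂
    · simp [U, V, mul_apply, Pi.single_apply, one_apply, h]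
    rcases eq_or_ne y b₁ with rfl | hy₁
    · simp [U, V, mul_apply, Pi.single_apply, one_apply, hy₂]
    · simp [U, V, mul_apply, Pi.single_apply, one_apply, hy₁, hy₂]
  have hVU : 1 + V * U = !![u b₁, v b₁; u b₂, v b₂] := by
    ext s t
    fin_cases s <;> fin_cases t <;> simp [U, V, Pi.single_apply, h, h.symm]
  rw [hUV, det_one_add_mul_comm, hVU, det_fin_two_of]

theorem mulVec_col_adjugate (A : Matrix n n R) (a : n) :
    A *ᵥ A.adjugate.col a = A.det • Pi.single a 1 := by
  rw [← mulVec_single_one, mulVec_mulVec, mul_adjugate, smul_mulVec, one_mulVec]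

theorem det_mul_adjugate_mul_adjugate_sub_adjugate_mul_adjugate (A : Matrix n n R)
    (a₁ a₂ : n) {b₁ b₂ : n} (h : b₁ ≠ b₂) :
    A.det * (A.adjugate b₁ a₁ * A.adjugate b₂ a₂ - A.adjugate b₁ a₂ * A.adjugate b₂ a₁) =
      A.det * (A.det * ((A.updateCol b₁ (Pi.single a₁ 1)).updateCol b₂ (Pi.single a₂ 1)).det) :=
  calc _ = A.det * (((1 : Matrix n n R).updateCol b₁ (A.adjugate.col a₁)).updateCol b₂
          (A.adjugate.col a₂)).det := by
        rw [det_updateCol_updateCol_one h]; rfl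
    _ = ((A.updateCol b₁ (A.det • Pi.single a₁ 1)).updateCol b₂
          (A.det • Pi.single a₂ 1)).det := by
        rw [← det_mul, mul_updateCol, mul_updateCol, mul_one, mulVec_col_adjugate,
          mulVec_col_adjugate]
    _ = _ := by
        rw [det_updateCol_smul, updateCol_comm _ h, det_updateCol_smul, updateCol_comm _ h.symm]

theorem adjugate_mul_adjugate_sub_adjugate_mul_adjugate (A : Matrix n n R)
    (a₁ a₂ : n) {b₁ b₂ : n} (h : b₁ ≠ b₂) :
    A.adjugate b₁ a₁ * A.adjugate b₂ a₂ - A.adjugate b₁ a₂ * A.adjugate b₂ a₁ =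
      A.det * ((A.updateCol b₁ (Pi.single a₁ 1)).updateCol b₂ (Pi.single a₂ 1)).det := by
  let f : MvPolynomial (n × n) ℤ →+* R :=
    MvPolynomial.eval₂Hom (Int.castRingHom R) fun p => A p.1 p.2
  have hA : (mvPolynomialX n n ℤ).map f = A := mvPolynomialX_map_eval₂ _ A
  have generic := congrArg f <| mul_left_cancel₀ (det_mvPolynomialX_ne_zero n ℤ)
    (det_mul_adjugate_mul_adjugate_sub_adjugate_mul_adjugate (mvPolynomialX n n ℤ) a₁ a₂ h)
  have hadj (i j : n) : f ((mvPolynomialX n n ℤ).adjugate i j) = A.adjugate i j := by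
    rw [← hA, ← RingHom.mapMatrix_apply, ← RingHom.map_adjugate]; rfl
  have hsingle (a : n) : f ∘ Pi.single a 1 = Pi.single a 1 := by
    ext x; simp [Pi.single_apply, apply_ite f]
  simpa only [map_sub, map_mul, hadj, RingHom.map_det, RingHom.mapMatrix_apply, map_updateCol,
    hsingle, hA] using generic

end Adjugate

section Fin

variable {k : ℕ} {R : Type*} [CommRing R]

theorem det_updateCol_single (A : Matrix (Fin (k + 1)) (Fin (k + 1)) R) (a b : Fin (k + 1)) :
    (A.updateCol b (Pi.single a 1)).det =
      (-1) ^ (a + b : ℕ) * (A.submatrix a.succAbove b.succAbove).det := by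
  rw [← det_transpose, ← updateRow_transpose, ← adjugate_apply,
    adjugate_fin_succ_eq_det_submatrix, ← det_transpose, transpose_submatrix,
    transpose_transpose, add_comm]

theorem det_updateCol_single_updateCol_single (A : Matrix (Fin (k + 2)) (Fin (k + 2)) R)
    (a₁ b₁ : Fin (k + 2)) (a₂ b₂ : Fin (k + 1)) :
    ((A.updateCol b₁ (Pi.single a₁ 1)).updateCol (b₁.succAbove b₂)
        (Pi.single (a₁.succAbove a₂) 1)).det =
      (-1) ^ (a₁ + b₁ : ℕ) * (-1) ^ (a₂ + b₂ : ℕ) *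
        (A.submatrix (a₁.succAbove ∘ a₂.succAbove) (b₁.succAbove ∘ b₂.succAbove)).det := by
  have hsub : (A.updateCol (b₁.succAbove b₂) (Pi.single (a₁.succAbove a₂) 1)).submatrix
      a₁.succAbove b₁.succAbove =
      (A.submatrix a₁.succAbove b₁.succAbove).updateCol b₂ (Pi.single a₂ 1) := by
    ext x y
    simp [updateCol_apply, Pi.single_apply]
  rw [updateCol_comm _ (Fin.succAbove_ne _ _).symm, det_updateCol_single, hsub,
    det_updateCol_single, submatrix_submatrix, mul_assoc]

theorem desnanot_jacobi (A : Matrix (Fin (k + 2)) (Fin (k + 2)) R)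
    {a₁ a₂ b₁ b₂ : Fin (k + 2)} (ha : a₁ < a₂) (hb : b₁ < b₂) :
    A.det * (A.submatrix (a₁.succAbove ∘ (a₂.pred (Fin.ne_zero_of_lt ha)).succAbove)
        (b₁.succAbove ∘ (b₂.pred (Fin.ne_zero_of_lt hb)).succAbove)).det =
      (A.submatrix a₁.succAbove b₁.succAbove).det * (A.submatrix a₂.succAbove b₂.succAbove).det -
        (A.submatrix a₁.succAbove b₂.succAbove).det *
          (A.submatrix a₂.succAbove b₁.succAbove).det := by
  set a₂' := a₂.pred (Fin.ne_zero_of_lt ha)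
  set b₂' := b₂.pred (Fin.ne_zero_of_lt hb)
  have hC := det_updateCol_single_updateCol_single A a₁ b₁ a₂' b₂'
  rw [Fin.succAbove_pred_of_lt _ _ ha, Fin.succAbove_pred_of_lt _ _ hb] at hC
  have hJ := adjugate_mul_adjugate_sub_adjugate_mul_adjugate A a₁ a₂ hb.ne
  have ha₂ : (a₂ : ℕ) = a₂' + 1 := by simp [a₂']; omega
  have hb₂ : (b₂ : ℕ) = b₂' + 1 := by simp [b₂']; omega
  simp only [adjugate_fin_succ_eq_det_submatrix, hC, ha₂, hb₂] at hJ
  -- every term of `hJ` now carries the sign `(-1) ^ (a₁ + b₁ + a₂' + b₂')`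
  exact (isUnit_neg_one.pow (a₁ + b₁ + a₂' + b₂' : ℕ)).mul_left_cancel
    (by linear_combination -hJ)

end Fin

end Matrix

namespace ASMDPP

open Matrix

theorem detOn_ofFn {R : Type*} [CommRing R] (M : ℕ → ℕ → R) {k : ℕ} (f g : Fin k → ℕ) :
    detOn M (List.ofFn f) (List.ofFn g) = ((of M).submatrix f g).det := by
  rw [detOn, ← det_submatrix_equiv_self (finCongr (List.length_ofFn (f := f)).symm)]
  congr 1
  ext a b
  simp [List.getD_eq_getElem?_getD, List.getElem?_ofFn]

/-- The Desnanot–Jacobi identity, for an `n × n` matrix `M` with rows and columns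
indexed by `1, …, n`: deleted-row and deleted-column submatrices are encoded by
filtering the index list `[1, …, n]`. -/
theorem desnanot_jacobi {R : Type*} [CommRing R] (n : ℕ)
    (M : ℕ → ℕ → R) (i₁ i₂ j₁ j₂ : ℕ) (hi₁ : 1 ≤ i₁) (hi : i₁ < i₂) (hi₂ : i₂ ≤ n)
    (hj₁ : 1 ≤ j₁) (hj : j₁ < j₂) (hj₂ : j₂ ≤ n) :
    detOn M (List.range' 1 n) (List.range' 1 n) *
      detOn M ((List.range' 1 n).filter (fun r => r ≠ i₁ ∧ r ≠ i₂))
        ((List.range' 1 n).filter (fun c => c ≠ j₁ ∧ c ≠ j₂)) =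
    detOn M ((List.range' 1 n).filter (· ≠ i₁)) ((List.range' 1 n).filter (· ≠ j₁)) *
      detOn M ((List.range' 1 n).filter (· ≠ i₂)) ((List.range' 1 n).filter (· ≠ j₂)) -
    detOn M ((List.range' 1 n).filter (· ≠ i₁)) ((List.range' 1 n).filter (· ≠ j₂)) *
      detOn M ((List.range' 1 n).filter (· ≠ i₂)) ((List.range' 1 n).filter (· ≠ j₁)) := by
  obtain ⟨k, rfl⟩ : ∃ k, n = k + 2 := ⟨n - 2, by omega⟩
  let s : Fin (k + 2) → ℕ := fun t => 1 + t
  have hs : Function.Injective s := fun _ _ h => Fin.ext (Nat.add_left_cancel h)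
  have index (i : ℕ) (h₁ : 1 ≤ i) (h₂ : i ≤ k + 2) : ∃ a, s a = i :=
    ⟨⟨i - 1, by omega⟩, by simp [s]; omega⟩
  obtain ⟨a₁, rfl⟩ := index i₁ hi₁ (by omega)
  obtain ⟨a₂, rfl⟩ := index i₂ (by omega) hi₂
  obtain ⟨b₁, rfl⟩ := index j₁ hj₁ (by omega)
  obtain ⟨b₂, rfl⟩ := index j₂ (by omega) hj₂
  have ha : a₁ < a₂ := Fin.lt_def.2 (Nat.lt_of_add_lt_add_left hi)
  have hb : b₁ < b₂ := Fin.lt_def.2 (Nat.lt_of_add_lt_add_left hj)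
  have hrange : List.range' 1 (k + 2) = List.ofFn s := List.range'_eq_ofFn 1 (k + 2)
  simp only [hrange, List.filter_ne_and_ne_ofFn_of_injective hs ha,
    List.filter_ne_and_ne_ofFn_of_injective hs hb, List.filter_ne_ofFn_of_injective hs,
    detOn_ofFn]
  exact Matrix.desnanot_jacobi ((of M).submatrix s s) ha hb

end ASMDPP
end

section
/- Bazin-type form of the Desnanot–Jacobi identity: for any (n+2)×n matrix N with entries in a commutative ring and any row indices 1 ≤ k₁ < k₂ < k₃ < k₄ ≤ n+2, one has det(N^{k₁,k₂}) · det(N^{k₃,k₄}) − det(N^{k₁,k₃}) · det(N^{k₂,k₄}) + det(N^{k₁,k₄}) · det(N^{k₂,k₃}) = 0, where N^{i,j} denotes the n×n matrix obtained from N by deleting rows i and j. -/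
theorem Matrix.sum_det_submatrix_succAbove_mul_det_vecCons {R : Type*} [CommRing R] {m : ℕ}
    (u : Matrix (Fin (m + 2)) (Fin (m + 1)) R) (s : Matrix (Fin m) (Fin (m + 1)) R) :
    ∑ j : Fin (m + 2),
      (-1) ^ (j : ℕ) * (u.submatrix j.succAbove id).det * (of (vecCons (u j) s)).det = 0 := by
  have repeated_column : ∀ k : Fin (m + 1),
      ∑ j : Fin (m + 2), (-1) ^ (j : ℕ) * u j k * (u.submatrix j.succAbove id).det = 0 := by
    intro k
    have h := det_succ_column_zero (of fun j => vecCons (u j k) (u j))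
    rw [det_zero_of_column_eq (i := 0) (j := k.succ) (Fin.succ_ne_zero k).symm (by simp)] at h
    exact h.symm
  calc ∑ j : Fin (m + 2),
        (-1) ^ (j : ℕ) * (u.submatrix j.succAbove id).det * (of (vecCons (u j) s)).det
      = ∑ j : Fin (m + 2), ∑ k : Fin (m + 1), (-1) ^ (k : ℕ) * (s.submatrix id k.succAbove).det *
          ((-1) ^ (j : ℕ) * u j k * (u.submatrix j.succAbove id).det) := by
        refine Finset.sum_congr rfl fun j _ => ?_
        rw [det_succ_row_zero (of (vecCons (u j) s)), Finset.mul_sum]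
        refine Finset.sum_congr rfl fun k _ => ?_
        rw [show of (vecCons (u j) s) 0 k = u j k from rfl,
          show (of (vecCons (u j) s)).submatrix Fin.succ k.succAbove = s.submatrix id k.succAbove
            from rfl]
        ring
    _ = 0 := by
        rw [Finset.sum_comm]
        simp [← Finset.mul_sum, repeated_column]

theorem List.getD_eraseIdx_succAbove {α : Type*} (l : List α) (d : α) {m : ℕ} (j : Fin (m + 1))
    (a : Fin m) : (l.eraseIdx j).getD a d = l.getD (j.succAbove a) d := by
  simp only [List.getD_eq_getElem?_getD, List.getElem?_eraseIdx, Fin.succAbove, Fin.lt_def,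
    Fin.val_castSucc]
  split_ifs <;> simp

theorem List.range'_eq_append_cons {s n k : ℕ} (h₁ : s ≤ k) (h₂ : k < s + n) :
    range' s n = range' s (k - s) ++ k :: range' (k + 1) (s + n - (k + 1)) := by
  conv_lhs => rw [show n = (k - s) + (s + n - (k + 1) + 1) by omega]
  rw [← List.range'_append_1, List.range'_succ, show s + (k - s) = k by omega]

theorem List.filter_range'_ne_and_ne {s len a b : ℕ} (ha : a < s ∨ s + len ≤ a)
    (hb : b < s ∨ s + len ≤ b) :
    (range' s len).filter (fun r => r ≠ a ∧ r ≠ b) = range' s len :=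
  List.filter_eq_self.2 fun x hx => by
    rw [List.mem_range'_1] at hx
    simp only [ne_eq, decide_eq_true_eq]
    omega

namespace ASMDPP

open Matrix

section detOn

variable {R : Type*} [CommRing R] (M : ℕ → ℕ → R) (cols : List ℕ)

theorem detOn_eq_det {rows : List ℕ} {m : ℕ} (h : rows.length = m) :
    detOn M rows cols = (of fun i j : Fin m => M (rows.getD i 0) (cols.getD j 0)).det := by
  subst h
  rfl

theorem sum_detOn_eraseIdx_mul_detOn_cons (u s : List ℕ) (h : u.length = s.length + 2) :
    ∑ j : Fin (s.length + 2), (-1) ^ (j : ℕ) * detOn M (u.eraseIdx j) cols *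
      detOn M (u.getD j 0 :: s) cols = 0 := by
  set U : Matrix (Fin (s.length + 2)) (Fin (s.length + 1)) R :=
    of fun i k => M (u.getD i 0) (cols.getD k 0)
  set S : Matrix (Fin s.length) (Fin (s.length + 1)) R :=
    of fun i k => M (s.getD i 0) (cols.getD k 0)
  rw [← sum_det_submatrix_succAbove_mul_det_vecCons U S]
  refine Finset.sum_congr rfl fun j _ => ?_
  have h_erase : detOn M (u.eraseIdx j) cols = (U.submatrix j.succAbove id).det := by
    rw [detOn_eq_det M cols (m := s.length + 1) (by simp [List.length_eraseIdx, h])]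
    congr 1
    ext a k
    simp only [U, of_apply, submatrix_apply, id, List.getD_eraseIdx_succAbove]
  have h_cons : detOn M (u.getD j 0 :: s) cols = (of (vecCons (U j) S)).det := by
    rw [detOn_eq_det M cols (m := s.length + 1) rfl]
    congr 1
    ext a k
    cases a using Fin.cases <;> rfl
  rw [h_erase, h_cons]

theorem detOn_cons_eq_zero_of_mem {x : ℕ} {rows : List ℕ} (hx : x ∈ rows) :
    detOn M (x :: rows) cols = 0 := by
  obtain ⟨i, hi, rfl⟩ := List.getElem_of_mem hx
  refine det_zero_of_row_eq (i := 0) (j := Fin.succ ⟨i, hi⟩) (Fin.succ_ne_zero _).symm ?_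
  funext j
  simp [List.getElem?_eq_getElem hi]

theorem detOn_append_cons (l₁ l₂ : List ℕ) (x : ℕ) :
    detOn M (l₁ ++ x :: l₂) cols = (-1) ^ l₁.length * detOn M (x :: (l₁ ++ l₂)) cols := by
  have hp : l₁.length < l₁.length + l₂.length + 1 := by omega
  set p : Fin (l₁.length + l₂.length + 1) := ⟨l₁.length, hp⟩
  rw [detOn_eq_det M cols (m := l₁.length + l₂.length + 1) (by simp; omega),
    detOn_eq_det M cols (m := l₁.length + l₂.length + 1) (by simp),
    show ((-1) ^ l₁.length : R) = (Equiv.Perm.sign p.cycleRange : ℤ) by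
      simp [Fin.sign_cycleRange, p],
    ← det_permute]
  congr
  ext i j
  simp only [of_apply, id]
  congr 1
  rcases lt_trichotomy i p with h | rfl | h
  · have hi : (i : ℕ) < l₁.length := h
    rw [Fin.coe_cycleRange_of_lt h, List.getD_cons_succ,
      List.getD_append _ _ _ _ hi, List.getD_append _ _ _ _ hi]
  · simp [p]
  · have hi : l₁.length < (i : ℕ) := h
    rw [Fin.cycleRange_of_gt h, List.getD_append_right _ _ _ _ hi.le]
    obtain ⟨k, hk⟩ : ∃ k, (i : ℕ) = k + 1 := ⟨i - 1, by omega⟩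
    rw [hk, List.getD_cons_succ, List.getD_append_right _ _ _ _ (by omega),
      show k + 1 - l₁.length = (k - l₁.length) + 1 by omega, List.getD_cons_succ]

theorem detOn_cons_cons_swap (x y : ℕ) (rows : List ℕ) :
    detOn M (x :: y :: rows) cols = -detOn M (y :: x :: rows) cols := by
  simpa using detOn_append_cons M cols [x] rows y

theorem detOn_plucker (x₁ x₂ x₃ x₄ : ℕ) (s : List ℕ) :
    detOn M (x₁ :: x₂ :: s) cols * detOn M (x₃ :: x₄ :: s) cols -
      detOn M (x₁ :: x₃ :: s) cols * detOn M (x₂ :: x₄ :: s) cols +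
      detOn M (x₁ :: x₄ :: s) cols * detOn M (x₂ :: x₃ :: s) cols = 0 := by
  have h := sum_detOn_eraseIdx_mul_detOn_cons M cols (x₂ :: x₃ :: x₄ :: s) (x₁ :: s) rfl
  -- every term past the third repeats a row of `s`
  have tail : ∀ j : Fin s.length, detOn M (s.getD j 0 :: x₁ :: s) cols = 0 := fun j =>
    detOn_cons_eq_zero_of_mem M cols
      (by rw [List.getD_eq_getElem _ _ j.isLt]; exact List.mem_cons_of_mem _ (List.getElem_mem _))
  simp only [List.length_cons, Fin.sum_univ_succ, Fin.val_zero, Fin.val_succ,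
    List.eraseIdx_cons_zero, List.eraseIdx_cons_succ, List.getD_cons_zero, List.getD_cons_succ,
    tail, mul_zero, Finset.sum_const_zero] at h
  rw [detOn_cons_cons_swap M cols x₂ x₁, detOn_cons_cons_swap M cols x₃ x₁,
    detOn_cons_cons_swap M cols x₄ x₁] at h
  linear_combination -h

theorem detOn_append_cons_append_cons (l₁ l₂ l₃ : List ℕ) (x y : ℕ) :
    detOn M (l₁ ++ x :: l₂ ++ y :: l₃) cols =
      (-1) ^ l₂.length * detOn M (x :: y :: (l₁ ++ l₂ ++ l₃)) cols := by
  have sign : ((-1) ^ ((l₁ ++ x :: l₂).length + (y :: l₁).length) : R) = (-1) ^ l₂.length := by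
    rw [show (l₁ ++ x :: l₂).length + (y :: l₁).length = l₂.length + 2 * (l₁.length + 1) by
      simp; ring, pow_add, pow_mul]
    simp
  rw [detOn_append_cons M cols (l₁ ++ x :: l₂) l₃ y,
    show y :: (l₁ ++ x :: l₂ ++ l₃) = (y :: l₁) ++ x :: (l₂ ++ l₃) by simp,
    detOn_append_cons M cols (y :: l₁), ← mul_assoc, ← pow_add, sign]
  simp

theorem detOn_bazin (A B C D E : List ℕ) (k₁ k₂ k₃ k₄ : ℕ) :
    detOn M (A ++ (B ++ (C ++ k₃ :: (D ++ k₄ :: E)))) cols *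
        detOn M (A ++ k₁ :: (B ++ k₂ :: (C ++ (D ++ E)))) cols -
      detOn M (A ++ (B ++ k₂ :: (C ++ (D ++ k₄ :: E)))) cols *
        detOn M (A ++ k₁ :: (B ++ (C ++ k₃ :: (D ++ E)))) cols +
      detOn M (A ++ (B ++ k₂ :: (C ++ k₃ :: (D ++ E)))) cols *
        detOn M (A ++ k₁ :: (B ++ (C ++ (D ++ k₄ :: E)))) cols = 0 := by
  have h₁₂ := detOn_append_cons_append_cons M cols (A ++ B ++ C) D E k₃ k₄
  have h₃₄ := detOn_append_cons_append_cons M cols A B (C ++ D ++ E) k₁ k₂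
  have h₁₃ := detOn_append_cons_append_cons M cols (A ++ B) (C ++ D) E k₂ k₄
  have h₂₄ := detOn_append_cons_append_cons M cols A (B ++ C) (D ++ E) k₁ k₃
  have h₁₄ := detOn_append_cons_append_cons M cols (A ++ B) C (D ++ E) k₂ k₃
  have h₂₃ := detOn_append_cons_append_cons M cols A (B ++ C ++ D) E k₁ k₄
  -- each product carries the sign `(-1) ^ (|B| + |D|)`, up to a factor `((-1) ^ |C|) ^ 2`
  have hc : ((-1) ^ C.length * (-1) ^ C.length : R) = 1 := by
    rw [← pow_add, ← two_mul, pow_mul]; simp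
  simp only [List.append_assoc, List.cons_append, List.length_append] at h₁₂ h₃₄ h₁₃ h₂₄ h₁₄ h₂₃
  rw [h₁₂, h₃₄, h₁₃, h₂₄, h₁₄, h₂₃]
  set s := A ++ (B ++ (C ++ (D ++ E)))
  linear_combination ((-1) ^ B.length * (-1) ^ D.length) * detOn_plucker M cols k₁ k₂ k₃ k₄ s +
    ((-1) ^ B.length * (-1) ^ D.length *
      (detOn M (k₁ :: k₄ :: s) cols * detOn M (k₂ :: k₃ :: s) cols -
        detOn M (k₁ :: k₃ :: s) cols * detOn M (k₂ :: k₄ :: s) cols)) * hc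

end detOn

/-- The Bazin-type form of the Desnanot–Jacobi identity, for an `(n+2) × n` matrix `N`
with rows indexed by `1, …, n+2` and columns indexed by `1, …, n`: `N^{i,j}` is the
`n × n` matrix obtained by deleting rows `i` and `j`. -/
theorem desnanot_jacobi_bazin {R : Type*} [CommRing R] (n : ℕ)
    (N : ℕ → ℕ → R) (k₁ k₂ k₃ k₄ : ℕ) (h₁ : 1 ≤ k₁) (h₁₂ : k₁ < k₂) (h₂₃ : k₂ < k₃)
    (h₃₄ : k₃ < k₄) (h₄ : k₄ ≤ n + 2) :
    detOn N ((List.range' 1 (n + 2)).filter (fun r => r ≠ k₁ ∧ r ≠ k₂))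
        (List.range' 1 n) *
      detOn N ((List.range' 1 (n + 2)).filter (fun r => r ≠ k₃ ∧ r ≠ k₄))
        (List.range' 1 n) -
    detOn N ((List.range' 1 (n + 2)).filter (fun r => r ≠ k₁ ∧ r ≠ k₃))
        (List.range' 1 n) *
      detOn N ((List.range' 1 (n + 2)).filter (fun r => r ≠ k₂ ∧ r ≠ k₄))
        (List.range' 1 n) +
    detOn N ((List.range' 1 (n + 2)).filter (fun r => r ≠ k₁ ∧ r ≠ k₄))
        (List.range' 1 n) *
      detOn N ((List.range' 1 (n + 2)).filter (fun r => r ≠ k₂ ∧ r ≠ k₃))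
        (List.range' 1 n) = 0 := by
  have h₁₃ := h₁₂.trans h₂₃
  have h₂₄ := h₂₃.trans h₃₄
  have h₁₄ := h₁₃.trans h₃₄
  rw [List.range'_eq_append_cons (s := 1) (n := n + 2) (k := k₁) h₁ (by omega),
    List.range'_eq_append_cons (s := k₁ + 1) (k := k₂) h₁₂,
    List.range'_eq_append_cons (s := k₂ + 1) (k := k₃) h₂₃,
    List.range'_eq_append_cons (s := k₃ + 1) (k := k₄) h₃₄]
  · simp (disch := omega) only [List.filter_append, List.filter_cons, List.filter_range'_ne_and_ne]
    simp only [ne_eq, not_true_eq_false, not_false_eq_true, and_true, and_false, and_self,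
      decide_true, decide_false, Bool.false_eq_true, ↓reduceIte, h₁₂.ne, h₁₃.ne, h₁₄.ne, h₂₃.ne,
      h₂₄.ne, h₃₄.ne, h₁₂.ne', h₁₃.ne', h₁₄.ne', h₂₃.ne', h₂₄.ne', h₃₄.ne']
    exact detOn_bazin N _ _ _ _ _ _ k₁ k₂ k₃ k₄
  all_goals omega

end ASMDPP
end
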